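/- Let B=(G,H) be a pseudo-Laman bigraph with biedge set ℰ without self-loops, fix a biedge ē∈ℰ, and let wt=(−1,…,−1)∈ℚ^{ℰ∖{ē}}. Suppose B has Laman number N≥1 with respect to ē, let d=(d_V,d_W) be a bidistance on B compatible with wt, and suppose the quotient bigraph B_d has Laman number M≥1 with respect to the biedge corresponding to ē. Then both d_V and d_W take values only in {0,−1}. -/

import Mathlib

set_option maxHeartbeats 1000000

noncomputable section
open Classical

namespace LamanPaper

variable {V E : Type}

/-- The adjacency relation induced by an incidence map `ends`. -/
def adjRel (ends : E → Sym2 V) : V → V → Prop := fun u v => ∃ e : E, ends e = s(u, v)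

/-- The setoid of connected components of the graph with incidence map `ends`. -/
def ccSetoid (ends : E → Sym2 V) : Setoid V :=
  ⟨Relation.EqvGen (adjRel ends), Relation.EqvGen.is_equivalence _⟩

/-- The number of connected components. -/
def numCC (ends : E → Sym2 V) : ℕ := Nat.card (Quotient (ccSetoid ends))

/-- The dimension of a graph: number of vertices minus number of connected components. -/
def gDim (ends : E → Sym2 V) : ℕ := Nat.card V - numCC ends

/-- Restriction of a graph to a set of edges. -/
def restrictEnds (ends : E → Sym2 V) (S : Set E) : {e : E // e ∈ S} → Sym2 V :=
  fun e => ends e.1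

/-- Deletion of a set of edges from a graph. -/
def deleteEnds (ends : E → Sym2 V) (S : Set E) : {e : E // e ∉ S} → Sym2 V :=
  fun e => ends e.1

/-- The setoid on vertices generated by contracting the edges in `S`. -/
def contrSetoid (ends : E → Sym2 V) (S : Set E) : Setoid V :=
  ⟨Relation.EqvGen fun u v => ∃ e ∈ S, ends e = s(u, v), Relation.EqvGen.is_equivalence _⟩

/-- Contraction of the edges in `S`: the remaining edges join the equivalence classes of
their endpoints. -/
def contractEnds (ends : E → Sym2 V) (S : Set E) :
    {e : E // e ∉ S} → Sym2 (Quotient (contrSetoid ends S)) :=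
  fun e => (ends e.1).map (Quotient.mk (contrSetoid ends S))

/-- An edge is a bridge if deleting it increases the number of connected components. -/
def IsBridge (ends : E → Sym2 V) (e : E) : Prop :=
  numCC ends < numCC (deleteEnds ends ({e} : Set E))

/-- The smaller endpoint of an (unordered) edge, with respect to a linear order. -/
def sMin [LinearOrder V] (s : Sym2 V) : V :=
  Sym2.lift ⟨fun a b => min a b, fun a b => min_comm a b⟩ s

/-- The larger endpoint of an (unordered) edge, with respect to a linear order. -/
def sMax [LinearOrder V] (s : Sym2 V) : V :=
  Sym2.lift ⟨fun a b => max a b, fun a b => max_comm a b⟩ s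

theorem sMin_mem [LinearOrder V] (s : Sym2 V) : sMin s ∈ s := by
  induction s using Sym2.ind with
  | _ x y => rcases min_choice x y with h | h <;> simp [sMin, Sym2.lift_mk, h, Sym2.mem_iff]

theorem sMax_mem [LinearOrder V] (s : Sym2 V) : sMax s ∈ s := by
  induction s using Sym2.ind with
  | _ x y => rcases max_choice x y with h | h <;> simp [sMax, Sym2.lift_mk, h, Sym2.mem_iff]

/-- A bigraph: a pair of finite multigraphs `G = (V, ℰ)` and `H = (W, ℰ)` sharing the same
set of (bi)edges, together with fixed total orders on the two vertex sets. -/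
structure Bigraph where
  ℰ : Type
  V : Type
  W : Type
  finE : Finite ℰ
  finV : Finite V
  finW : Finite W
  τG : ℰ → Sym2 V
  τH : ℰ → Sym2 W
  ordV : LinearOrder V
  ordW : LinearOrder W

namespace Bigraph

variable (B : Bigraph)

instance : Finite B.ℰ := B.finE
instance : Finite B.V := B.finV
instance : Finite B.W := B.finW

/-- The dimension of the first graph of a bigraph. -/
def dimG : ℕ := gDim B.τG

/-- The dimension of the second graph of a bigraph. -/
def dimH : ℕ := gDim B.τH

/-- A bigraph is pseudo-Laman if `dim G + dim H = |ℰ| + 1`. -/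
def PseudoLaman : Prop := B.dimG + B.dimH = Nat.card B.ℰ + 1

/-- A bigraph has a (self-)loop if some biedge is a self-loop in `G` or in `H`. -/
def HasLoop : Prop := (∃ e, (B.τG e).IsDiag) ∨ (∃ e, (B.τH e).IsDiag)

/-- The set `P` of ordered pairs of distinct vertices of `G` joined by some edge. -/
def Pset : Set (B.V × B.V) := {p | p.1 ≠ p.2 ∧ ∃ e, B.τG e = s(p.1, p.2)}

/-- The set `Q` of ordered pairs of distinct vertices of `H` joined by some edge. -/
def Qset : Set (B.W × B.W) := {q | q.1 ≠ q.2 ∧ ∃ e, B.τH e = s(q.1, q.2)}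

/-- The smaller endpoint (w.r.t. the fixed total order) of a biedge in `G`. -/
def eFstG (e : B.ℰ) : B.V := letI := B.ordV; sMin (B.τG e)

/-- The larger endpoint of a biedge in `G`. -/
def eSndG (e : B.ℰ) : B.V := letI := B.ordV; sMax (B.τG e)

/-- The smaller endpoint of a biedge in `H`. -/
def eFstH (e : B.ℰ) : B.W := letI := B.ordW; sMin (B.τH e)

/-- The larger endpoint of a biedge in `H`. -/
def eSndH (e : B.ℰ) : B.W := letI := B.ordW; sMax (B.τH e)

theorem eFstG_mem (e : B.ℰ) : B.eFstG e ∈ B.τG e := by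
  letI := B.ordV; exact sMin_mem _

theorem eSndG_mem (e : B.ℰ) : B.eSndG e ∈ B.τG e := by
  letI := B.ordV; exact sMax_mem _

theorem eFstH_mem (e : B.ℰ) : B.eFstH e ∈ B.τH e := by
  letI := B.ordW; exact sMin_mem _

theorem eSndH_mem (e : B.ℰ) : B.eSndH e ∈ B.τH e := by
  letI := B.ordW; exact sMax_mem _

/-- The affine solution set `Z^B(λ)` of a bigraph with distinguished biedge `ebar` and
parameters `lam`. -/
def ZSet (ebar : B.ℰ) (lam : {e : B.ℰ // e ≠ ebar} → ℂ) :
    Set ((↥B.Pset → ℂ) × (↥B.Qset → ℂ)) :=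
  {xy |
    (∀ p : ↥B.Pset, (p : B.V × B.V) = (B.eFstG ebar, B.eSndG ebar) → xy.1 p = 1) ∧
    (∀ q : ↥B.Qset, (q : B.W × B.W) = (B.eFstH ebar, B.eSndH ebar) → xy.2 q = 1) ∧
    (∀ e : {e : B.ℰ // e ≠ ebar}, ∀ p : ↥B.Pset, ∀ q : ↥B.Qset,
      (p : B.V × B.V) = (B.eFstG e.1, B.eSndG e.1) →
      (q : B.W × B.W) = (B.eFstH e.1, B.eSndH e.1) →
      xy.1 p * xy.2 q = lam e) ∧
    (∀ (n : ℕ) (u : ℕ → B.V) (w : Fin n → ↥B.Pset),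
      (∀ i : Fin n, (w i : B.V × B.V) = (u i.1, u (i.1 + 1))) → u n = u 0 →
      ∑ i, xy.1 (w i) = 0) ∧
    (∀ (n : ℕ) (u : ℕ → B.W) (w : Fin n → ↥B.Qset),
      (∀ i : Fin n, (w i : B.W × B.W) = (u i.1, u (i.1 + 1))) → u n = u 0 →
      ∑ i, xy.2 (w i) = 0)}

/-- `B` has Laman number `N` with respect to the biedge `ebar`:  there is a nonzero
polynomial `p` in the parameters such that whenever `p` does not vanish, the solution set
`Z^B(λ)` has exactly `N` elements.  By convention a bigraph containing a self-loop has
Laman number `0`. -/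
def HasLamanNumber (ebar : B.ℰ) (N : ℕ) : Prop :=
  (B.HasLoop ∧ N = 0) ∨
  (¬ B.HasLoop ∧ ∃ P : MvPolynomial {e : B.ℰ // e ≠ ebar} ℂ, P ≠ 0 ∧
    ∀ lam : {e : B.ℰ // e ≠ ebar} → ℂ, MvPolynomial.eval lam P ≠ 0 →
      (B.ZSet ebar lam).Finite ∧ Nat.card ↥(B.ZSet ebar lam) = N)

/-- The bigraph obtained by restricting the biedges to a subset `S` (both in `G` and `H`). -/
def restrict (S : Set B.ℰ) : Bigraph where
  ℰ := {e : B.ℰ // e ∈ S}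
  V := B.V
  W := B.W
  finE := Subtype.finite
  finV := B.finV
  finW := B.finW
  τG := fun e => B.τG e.1
  τH := fun e => B.τH e.1
  ordV := B.ordV
  ordW := B.ordW

/-- The bigraph `^M B = (G / M, H ∖ M)`: contract the biedges of `M` in `G` and delete them
in `H`. -/
def ctrG (M : Set B.ℰ) (ord : LinearOrder (Quotient (contrSetoid B.τG M))) : Bigraph where
  ℰ := {e : B.ℰ // e ∉ M}
  V := Quotient (contrSetoid B.τG M)
  W := B.W
  finE := Subtype.finite
  finV := Quotient.finite _
  finW := B.finW
  τG := contractEnds B.τG M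
  τH := fun e => B.τH e.1
  ordV := ord
  ordW := B.ordW

/-- The bigraph `B ^ M = (G ∖ M, H / M)`: delete the biedges of `M` in `G` and contract them
in `H`. -/
def ctrH (M : Set B.ℰ) (ord : LinearOrder (Quotient (contrSetoid B.τH M))) : Bigraph where
  ℰ := {e : B.ℰ // e ∉ M}
  V := B.V
  W := Quotient (contrSetoid B.τH M)
  finE := Subtype.finite
  finV := B.finV
  finW := Quotient.finite _
  τG := fun e => B.τG e.1
  τH := contractEnds B.τH M
  ordV := B.ordV
  ordW := ord

/-! ### Bidistances -/

/-- Symmetry of a function on `P`: `d_V(u,v) = d_V(v,u)`. -/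
def BidistSymmG (dV : ↥B.Pset → ℚ) : Prop :=
  ∀ p p' : ↥B.Pset, (p' : B.V × B.V) = ((p : B.V × B.V).2, (p : B.V × B.V).1) → dV p' = dV p

/-- Symmetry of a function on `Q`: `d_W(t,w) = d_W(w,t)`. -/
def BidistSymmH (dW : ↥B.Qset → ℚ) : Prop :=
  ∀ q q' : ↥B.Qset, (q' : B.W × B.W) = ((q : B.W × B.W).2, (q : B.W × B.W).1) → dW q' = dW q

/-- The sum condition: `d_V(u,v) + d_W(t,w) = wt(e)` for every biedge `e ≠ ebar`. -/
def BidistSum (ebar : B.ℰ) (wt : {e : B.ℰ // e ≠ ebar} → ℚ)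
    (dV : ↥B.Pset → ℚ) (dW : ↥B.Qset → ℚ) : Prop :=
  ∀ e : {e : B.ℰ // e ≠ ebar}, ∀ p : ↥B.Pset, ∀ q : ↥B.Qset,
    s((p : B.V × B.V).1, (p : B.V × B.V).2) = B.τG e.1 →
    s((q : B.W × B.W).1, (q : B.W × B.W).2) = B.τH e.1 →
    dV p + dW q = wt e

/-- The base condition: `d_V(ū,v̄) = d_W(t̄,w̄) = 0` on the distinguished biedge. -/
def BidistBase (ebar : B.ℰ) (dV : ↥B.Pset → ℚ) (dW : ↥B.Qset → ℚ) : Prop :=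
  (∀ p : ↥B.Pset, s((p : B.V × B.V).1, (p : B.V × B.V).2) = B.τG ebar → dV p = 0) ∧
  (∀ q : ↥B.Qset, s((q : B.W × B.W).1, (q : B.W × B.W).2) = B.τH ebar → dW q = 0)

/-- On every closed walk in `G`, the minimum of `d_V` over the consecutive vertex pairs is
attained at least twice. -/
def BidistMinG (dV : ↥B.Pset → ℚ) : Prop :=
  ∀ (n : ℕ) (u : ℕ → B.V) (w : Fin n → ↥B.Pset),
    (∀ i : Fin n, (w i : B.V × B.V) = (u i.1, u (i.1 + 1))) → u n = u 0 →
    ∀ i : Fin n, (∀ k, dV (w i) ≤ dV (w k)) → ∃ j, j ≠ i ∧ dV (w j) = dV (w i)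

/-- On every closed walk in `H`, the minimum of `d_W` over the consecutive vertex pairs is
attained at least twice. -/
def BidistMinH (dW : ↥B.Qset → ℚ) : Prop :=
  ∀ (n : ℕ) (u : ℕ → B.W) (w : Fin n → ↥B.Qset),
    (∀ i : Fin n, (w i : B.W × B.W) = (u i.1, u (i.1 + 1))) → u n = u 0 →
    ∀ i : Fin n, (∀ k, dW (w i) ≤ dW (w k)) → ∃ j, j ≠ i ∧ dW (w j) = dW (w i)

/-- A bidistance on `B` compatible with the weight vector `wt`. -/
def IsBidistance (ebar : B.ℰ) (wt : {e : B.ℰ // e ≠ ebar} → ℚ)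
    (dV : ↥B.Pset → ℚ) (dW : ↥B.Qset → ℚ) : Prop :=
  B.BidistSymmG dV ∧ B.BidistSymmH dW ∧ B.BidistSum ebar wt dV dW ∧
  B.BidistBase ebar dV dW ∧ B.BidistMinG dV ∧ B.BidistMinH dW

/-! ### The quotient bigraph `B_d` -/

/-- The value of `d_V` on (the endpoint pair of) a biedge. -/
def gvalG (dV : ↥B.Pset → ℚ) (e : B.ℰ) : ℚ :=
  if h : ∃ p : ↥B.Pset, s((p : B.V × B.V).1, (p : B.V × B.V).2) = B.τG e then dV h.choose
  else 0

/-- The value of `d_W` on (the endpoint pair of) a biedge. -/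
def gvalH (dW : ↥B.Qset → ℚ) (e : B.ℰ) : ℚ :=
  if h : ∃ q : ↥B.Qset, s((q : B.W × B.W).1, (q : B.W × B.W).2) = B.τH e then dW h.choose
  else 0

/-- Incidences of the graph `G`: pairs of a biedge and one of its endpoints. -/
def IncG := {q : B.ℰ × B.V // q.2 ∈ B.τG q.1}

/-- Incidences of the graph `H`. -/
def IncH := {q : B.ℰ × B.W // q.2 ∈ B.τH q.1}

instance : Finite B.IncG := by unfold IncG; infer_instance
instance : Finite B.IncH := by unfold IncH; infer_instance

/-- Two incidences `(e,v)`, `(e',v')` of `G` are identified in `B_d` if the `d_V`-levels of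
`e` and `e'` agree (say equal to `α`) and `v`, `v'` are connected by edges of level `> α`. -/
def relIncG (dV : ↥B.Pset → ℚ) : B.IncG → B.IncG → Prop := fun a b =>
  B.gvalG dV a.1.1 = B.gvalG dV b.1.1 ∧
  Relation.EqvGen (fun u v => ∃ e, B.gvalG dV a.1.1 < B.gvalG dV e ∧ B.τG e = s(u, v))
    a.1.2 b.1.2

def relIncH (dW : ↥B.Qset → ℚ) : B.IncH → B.IncH → Prop := fun a b =>
  B.gvalH dW a.1.1 = B.gvalH dW b.1.1 ∧
  Relation.EqvGen (fun u v => ∃ e, B.gvalH dW a.1.1 < B.gvalH dW e ∧ B.τH e = s(u, v))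
    a.1.2 b.1.2

def incSetoidG (dV : ↥B.Pset → ℚ) : Setoid B.IncG :=
  ⟨Relation.EqvGen (B.relIncG dV), Relation.EqvGen.is_equivalence _⟩

def incSetoidH (dW : ↥B.Qset → ℚ) : Setoid B.IncH :=
  ⟨Relation.EqvGen (B.relIncH dW), Relation.EqvGen.is_equivalence _⟩

/-- The vertices of the first graph `G_{d_V}` of the quotient bigraph `B_d`:
classes of incidences.  This realizes the disjoint union of the contractions
`G_{≥α} / G_{>α}` (with isolated vertices discarded). -/
def QVertG (dV : ↥B.Pset → ℚ) := Quotient (B.incSetoidG dV)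

def QVertH (dW : ↥B.Qset → ℚ) := Quotient (B.incSetoidH dW)

/-- The incidence map of `G_{d_V}`. -/
def quotEndsG (dV : ↥B.Pset → ℚ) : B.ℰ → Sym2 (B.QVertG dV) := fun e =>
  s(Quotient.mk (B.incSetoidG dV) ⟨(e, B.eFstG e), B.eFstG_mem e⟩,
    Quotient.mk (B.incSetoidG dV) ⟨(e, B.eSndG e), B.eSndG_mem e⟩)

/-- The incidence map of `H_{d_W}`. -/
def quotEndsH (dW : ↥B.Qset → ℚ) : B.ℰ → Sym2 (B.QVertH dW) := fun e =>
  s(Quotient.mk (B.incSetoidH dW) ⟨(e, B.eFstH e), B.eFstH_mem e⟩,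
    Quotient.mk (B.incSetoidH dW) ⟨(e, B.eSndH e), B.eSndH_mem e⟩)

/-- The quotient bigraph `B_d = (G_{d_V}, H_{d_W})` of a bigraph by a bidistance `(d_V, d_W)`,
with arbitrarily fixed total orders on the new vertex sets.  It has the same biedges as `B`. -/
def quotBigraph (dV : ↥B.Pset → ℚ) (dW : ↥B.Qset → ℚ)
    (oV : LinearOrder (B.QVertG dV)) (oW : LinearOrder (B.QVertH dW)) : Bigraph where
  ℰ := B.ℰ
  V := B.QVertG dV
  W := B.QVertH dW
  finE := B.finE
  finV := Quotient.finite _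
  finW := Quotient.finite _
  τG := B.quotEndsG dV
  τH := B.quotEndsH dW
  ordV := oV
  ordW := oW

/-! ### Untangling -/

/-- `B` untangles via the biedge `ebar` with respect to the decomposition
`ℰ = E1 ⊔ E2 ⊔ {ebar}`, `V = V1 ⊔ V2`, `W = W1 ⊔ W2`:  the graph `G` is the disjoint union
of the subgraph on `V1` with edges `E1 ∪ {ebar}` and the subgraph on `V2` with edges `E2`,
while `H` is the disjoint union of the subgraph on `W1` with edges `E1` and the subgraph on
`W2` with edges `E2 ∪ {ebar}`.  The two bigraphs into which `B` untangles are then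
`B₁ = B.restrict E1` and `B₂ = B.restrict E2`. -/
def Untangles (ebar : B.ℰ) (E1 E2 : Set B.ℰ) (V1 V2 : Set B.V) (W1 W2 : Set B.W) : Prop :=
  ebar ∉ E1 ∧ ebar ∉ E2 ∧ E1 ∩ E2 = ∅ ∧ (∀ e : B.ℰ, e = ebar ∨ e ∈ E1 ∨ e ∈ E2) ∧
  V1 ∩ V2 = ∅ ∧ V1 ∪ V2 = Set.univ ∧
  (∀ e ∈ E1, ∀ v, v ∈ B.τG e → v ∈ V1) ∧ (∀ v, v ∈ B.τG ebar → v ∈ V1) ∧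
  (∀ e ∈ E2, ∀ v, v ∈ B.τG e → v ∈ V2) ∧
  W1 ∩ W2 = ∅ ∧ W1 ∪ W2 = Set.univ ∧
  (∀ e ∈ E1, ∀ x, x ∈ B.τH e → x ∈ W1) ∧
  (∀ e ∈ E2, ∀ x, x ∈ B.τH e → x ∈ W2) ∧ (∀ x, x ∈ B.τH ebar → x ∈ W2)

/-! ### The rational map `f_B` -/

/-- The vector of coordinates of the rational map `f_B`, evaluated on representatives
`x : V → ℂ` and `y : W → ℂ`:  the `e`-th coordinate is `(x_u - x_v)(y_t - y_w)` where
`{u,v} = τ_G(e)` with `u ≺ v` and `{t,w} = τ_H(e)` with `t ≺ w`.  (For a self-loop the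
corresponding factor is `0`.) -/
def fVec (x : B.V → ℂ) (y : B.W → ℂ) : B.ℰ → ℂ :=
  fun e => (x (B.eFstG e) - x (B.eSndG e)) * (y (B.eFstH e) - y (B.eSndH e))

/-- The subspace `L_G` of vectors that are constant on each connected component of `G`. -/
def LG : Submodule ℂ (B.V → ℂ) where
  carrier := {x | ∀ u v : B.V, Relation.EqvGen (adjRel B.τG) u v → x u = x v}
  add_mem' := by
    intro a b ha hb u v h
    simp only [Pi.add_apply, ha u v h, hb u v h]
  zero_mem' := by intro u v _; rfl
  smul_mem' := by
    intro c a ha u v h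
    simp only [Pi.smul_apply, ha u v h]

/-- The subspace `L_H` of vectors that are constant on each connected component of `H`. -/
def LH : Submodule ℂ (B.W → ℂ) where
  carrier := {y | ∀ u v : B.W, Relation.EqvGen (adjRel B.τH) u v → y u = y v}
  add_mem' := by
    intro a b ha hb u v h
    simp only [Pi.add_apply, ha u v h, hb u v h]
  zero_mem' := by intro u v _; rfl
  smul_mem' := by
    intro c a ha u v h
    simp only [Pi.smul_apply, ha u v h]

/-- Dominance of the rational map `f_B`:  the image of `f_B` is not contained in any
proper algebraic subset of `ℙ(ℂ^ℰ)`, equivalently in no zero set of a nonzero homogeneous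
polynomial. -/
def FDominant : Prop :=
  ¬ ∃ (n : ℕ) (P : MvPolynomial B.ℰ ℂ), P ≠ 0 ∧ P.IsHomogeneous n ∧
      ∀ (x : B.V → ℂ) (y : B.W → ℂ), MvPolynomial.eval (B.fVec x y) P = 0

end Bigraph

/-! The levels of the bidistance split `G_{d_V}` and `H_{d_W}` into unions of connected
components: every vertex of `G_{d_V}` carries the common `d_V`-value of its incident biedges,
and likewise for `H_{d_W}`.  If some biedge had level `α ∉ {0, -1}`, multiplying all
`x`-coordinates of level `α` by `t` and all `y`-coordinates of level `-1 - α` by `t⁻¹`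
would preserve `Z^{B_d}(λ)` (both levels avoid `ē`, and a biedge has `G`-level `α` exactly
when its `H`-level is `-1 - α`).  A nonempty solution set would then be infinite. -/

theorem _root_.MvPolynomial.exists_eval_ne_zero_and_ne_zero {R σ : Type*} [CommRing R] [IsDomain R]
    [Infinite R] {P : MvPolynomial σ R} (hP : P ≠ 0) (i : σ) :
    ∃ x : σ → R, MvPolynomial.eval x P ≠ 0 ∧ x i ≠ 0 := by
  have hPX : P * MvPolynomial.X i ≠ 0 := mul_ne_zero hP (MvPolynomial.X_ne_zero i)
  by_contra! h
  refine hPX (MvPolynomial.funext fun x => ?_)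
  by_cases hx : MvPolynomial.eval x P = 0
  · simp [hx]
  · simp [h x hx]

theorem sMin_sMax {α : Type} [LinearOrder α] (s : Sym2 α) : s(sMin s, sMax s) = s := by
  induction s using Sym2.ind with
  | _ x y =>
    simp only [sMin, sMax, Sym2.lift_mk]
    rcases le_total x y with h | h
    · rw [min_eq_left h, max_eq_right h]
    · rw [min_eq_right h, max_eq_left h, Sym2.eq_swap]

theorem sMin_ne_sMax {α : Type} [LinearOrder α] {s : Sym2 α} (h : ¬ s.IsDiag) :
    sMin s ≠ sMax s := fun hm => h (by rw [← sMin_sMax s, hm, Sym2.mk_isDiag_iff])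

theorem mem_iff_mem_zero_of_forall_succ {α : Type*} {S : Set α} {u : ℕ → α} {n : ℕ}
    (h : ∀ j < n, (u j ∈ S ↔ u (j + 1) ∈ S)) : ∀ i ≤ n, (u i ∈ S ↔ u 0 ∈ S) := by
  intro i hi
  induction i with
  | zero => rfl
  | succ i ih => exact (h i hi).symm.trans (ih (Nat.le_of_succ_le hi))

theorem _root_.Finset.sum_ite_mul_eq_zero {ι R : Type*} [Fintype ι] [Semiring R] {c : ι → Prop}
    (hc : ∀ i j, c i → c j) (f : ι → R) (hf : ∑ i, f i = 0) (t : R) :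
    ∑ i, (if c i then t * f i else f i) = 0 := by
  by_cases h : ∃ i, c i
  · obtain ⟨i₀, hi₀⟩ := h
    rw [Finset.sum_congr rfl fun i _ => if_pos (hc i₀ i hi₀), ← Finset.mul_sum, hf, mul_zero]
  · simp only [not_exists] at h
    rwa [Finset.sum_congr rfl fun i _ => if_neg (h i)]

namespace Bigraph

variable (B : Bigraph)

theorem exists_Pset_eq (e : B.ℰ) (h : ¬ (B.τG e).IsDiag) :
    ∃ p : ↥B.Pset, (p : B.V × B.V) = (B.eFstG e, B.eSndG e) ∧
      s((p : B.V × B.V).1, (p : B.V × B.V).2) = B.τG e := by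
  have hs : s(B.eFstG e, B.eSndG e) = B.τG e := @sMin_sMax _ B.ordV _
  exact ⟨⟨(B.eFstG e, B.eSndG e), @sMin_ne_sMax _ B.ordV _ h, e, hs.symm⟩, rfl, hs⟩

theorem exists_Qset_eq (e : B.ℰ) (h : ¬ (B.τH e).IsDiag) :
    ∃ q : ↥B.Qset, (q : B.W × B.W) = (B.eFstH e, B.eSndH e) ∧
      s((q : B.W × B.W).1, (q : B.W × B.W).2) = B.τH e := by
  have hs : s(B.eFstH e, B.eSndH e) = B.τH e := @sMin_sMax _ B.ordW _
  exact ⟨⟨(B.eFstH e, B.eSndH e), @sMin_ne_sMax _ B.ordW _ h, e, hs.symm⟩, rfl, hs⟩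

variable {B}

section Scaling

variable {ebar : B.ℰ} {lam : {e : B.ℰ // e ≠ ebar} → ℂ} {SG : Set B.V} {SH : Set B.W}

def scaleSol (SG : Set B.V) (SH : Set B.W) (t : ℂ)
    (xy : (↥B.Pset → ℂ) × (↥B.Qset → ℂ)) : (↥B.Pset → ℂ) × (↥B.Qset → ℂ) :=
  (fun p => if (p : B.V × B.V).1 ∈ SG then t * xy.1 p else xy.1 p,
   fun q => if (q : B.W × B.W).1 ∈ SH then t⁻¹ * xy.2 q else xy.2 q)

theorem scaleSol_mem_ZSet
    (hSG : ∀ p : ↥B.Pset, (p : B.V × B.V).1 ∈ SG ↔ (p : B.V × B.V).2 ∈ SG)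
    (hSH : ∀ q : ↥B.Qset, (q : B.W × B.W).1 ∈ SH ↔ (q : B.W × B.W).2 ∈ SH)
    (hG : B.eFstG ebar ∉ SG) (hH : B.eFstH ebar ∉ SH)
    (hGH : ∀ e, e ≠ ebar → (B.eFstG e ∈ SG ↔ B.eFstH e ∈ SH))
    {t : ℂ} (ht : t ≠ 0) {xy : (↥B.Pset → ℂ) × (↥B.Qset → ℂ)}
    (hxy : xy ∈ B.ZSet ebar lam) : scaleSol SG SH t xy ∈ B.ZSet ebar lam := by
  obtain ⟨hx1, hy1, hprod, hwalkG, hwalkH⟩ := hxy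
  refine ⟨fun p hp => ?_, fun q hq => ?_, fun e p q hp hq => ?_,
    fun n u w hw hcl => ?_, fun n u w hw hcl => ?_⟩
  · simp only [scaleSol, hp, if_neg hG, hx1 p hp]
  · simp only [scaleSol, hq, if_neg hH, hy1 q hq]
  · simp only [scaleSol, hp, hq, ← hGH e.1 e.2]
    split_ifs
    · rw [mul_mul_mul_comm, mul_inv_cancel₀ ht, one_mul, hprod e p q hp hq]
    · exact hprod e p q hp hq
  · have hu : ∀ i ≤ n, (u i ∈ SG ↔ u 0 ∈ SG) :=
      mem_iff_mem_zero_of_forall_succ fun j hj => by simpa [hw ⟨j, hj⟩] using hSG (w ⟨j, hj⟩)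
    refine Finset.sum_ite_mul_eq_zero (fun i j hi => ?_) _ (hwalkG n u w hw hcl) t
    rw [hw i] at hi
    rw [hw j, hu j j.2.le, ← hu i i.2.le]
    exact hi
  · have hu : ∀ i ≤ n, (u i ∈ SH ↔ u 0 ∈ SH) :=
      mem_iff_mem_zero_of_forall_succ fun j hj => by simpa [hw ⟨j, hj⟩] using hSH (w ⟨j, hj⟩)
    refine Finset.sum_ite_mul_eq_zero (fun i j hi => ?_) _ (hwalkH n u w hw hcl) t⁻¹
    rw [hw i] at hi
    rw [hw j, hu j j.2.le, ← hu i i.2.le]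
    exact hi

theorem ZSet_infinite_of_scaling (hloop : ¬ B.HasLoop)
    (hSG : ∀ p : ↥B.Pset, (p : B.V × B.V).1 ∈ SG ↔ (p : B.V × B.V).2 ∈ SG)
    (hSH : ∀ q : ↥B.Qset, (q : B.W × B.W).1 ∈ SH ↔ (q : B.W × B.W).2 ∈ SH)
    (hG : B.eFstG ebar ∉ SG) (hH : B.eFstH ebar ∉ SH)
    (hGH : ∀ e, e ≠ ebar → (B.eFstG e ∈ SG ↔ B.eFstH e ∈ SH))
    {e : B.ℰ} (he : e ≠ ebar) (heS : B.eFstG e ∈ SG) (hlam : lam ⟨e, he⟩ ≠ 0)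
    (hne : (B.ZSet ebar lam).Nonempty) : (B.ZSet ebar lam).Infinite := by
  obtain ⟨xy, hxy⟩ := hne
  obtain ⟨p, hp, -⟩ := B.exists_Pset_eq e fun h => hloop (Or.inl ⟨e, h⟩)
  obtain ⟨q, hq, -⟩ := B.exists_Qset_eq e fun h => hloop (Or.inr ⟨e, h⟩)
  have hxp : xy.1 p ≠ 0 := fun h0 =>
    hlam (by rw [← hxy.2.2.1 ⟨e, he⟩ p q hp hq, h0, zero_mul])
  have hpS : (p : B.V × B.V).1 ∈ SG := by rw [hp]; exact heS
  have hinj : Function.Injective fun n : ℕ => scaleSol SG SH ((n : ℂ) + 1) xy := by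
    intro a b hab
    have hx := congrFun (congrArg Prod.fst hab) p
    simp only [scaleSol, if_pos hpS] at hx
    exact_mod_cast add_right_cancel (mul_right_cancel₀ hxp hx)
  exact Set.infinite_of_injective_forall_mem hinj fun n =>
    scaleSol_mem_ZSet hSG hSH hG hH hGH (Nat.cast_add_one_ne_zero n) hxy

end Scaling

theorem HasLamanNumber.exists_finite_nonempty {ebar : B.ℰ} {M : ℕ}
    (h : B.HasLamanNumber ebar M) (hM : 1 ≤ M) (i : {e : B.ℰ // e ≠ ebar}) :
    ¬ B.HasLoop ∧ ∃ lam : {e : B.ℰ // e ≠ ebar} → ℂ, lam i ≠ 0 ∧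
      (B.ZSet ebar lam).Finite ∧ (B.ZSet ebar lam).Nonempty := by
  rcases h with ⟨-, rfl⟩ | ⟨hloop, P, hP, hgen⟩
  · omega
  obtain ⟨lam, hPlam, hlam⟩ := MvPolynomial.exists_eval_ne_zero_and_ne_zero hP i
  obtain ⟨hfin, hcard⟩ := hgen lam hPlam
  have : Nonempty ↥(B.ZSet ebar lam) := (Nat.card_ne_zero.mp (by omega)).1
  exact ⟨hloop, lam, hlam, hfin, Set.nonempty_coe_sort.mp this⟩

section Levels

variable {ebar : B.ℰ} {dV : ↥B.Pset → ℚ} {dW : ↥B.Qset → ℚ}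

theorem gvalG_eq (hsym : B.BidistSymmG dV) {e : B.ℰ} (p : ↥B.Pset)
    (h : s((p : B.V × B.V).1, (p : B.V × B.V).2) = B.τG e) : B.gvalG dV e = dV p := by
  have hex : ∃ p' : ↥B.Pset, s((p' : B.V × B.V).1, (p' : B.V × B.V).2) = B.τG e := ⟨p, h⟩
  rw [gvalG, dif_pos hex]
  rcases Sym2.eq_iff.mp (hex.choose_spec.trans h.symm) with ⟨h1, h2⟩ | ⟨h1, h2⟩
  · rw [Subtype.ext (Prod.ext h1 h2)]
  · exact hsym p hex.choose (Prod.ext h1 h2)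

theorem gvalH_eq (hsym : B.BidistSymmH dW) {e : B.ℰ} (q : ↥B.Qset)
    (h : s((q : B.W × B.W).1, (q : B.W × B.W).2) = B.τH e) : B.gvalH dW e = dW q := by
  have hex : ∃ q' : ↥B.Qset, s((q' : B.W × B.W).1, (q' : B.W × B.W).2) = B.τH e := ⟨q, h⟩
  rw [gvalH, dif_pos hex]
  rcases Sym2.eq_iff.mp (hex.choose_spec.trans h.symm) with ⟨h1, h2⟩ | ⟨h1, h2⟩
  · rw [Subtype.ext (Prod.ext h1 h2)]
  · exact hsym q hex.choose (Prod.ext h1 h2)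

theorem gvalG_ebar (hloop : ¬ B.HasLoop) (hsym : B.BidistSymmG dV)
    (hbase : B.BidistBase ebar dV dW) : B.gvalG dV ebar = 0 := by
  obtain ⟨p, -, hp⟩ := B.exists_Pset_eq ebar fun h => hloop (Or.inl ⟨ebar, h⟩)
  rw [gvalG_eq hsym p hp, hbase.1 p hp]

theorem gvalH_ebar (hloop : ¬ B.HasLoop) (hsym : B.BidistSymmH dW)
    (hbase : B.BidistBase ebar dV dW) : B.gvalH dW ebar = 0 := by
  obtain ⟨q, -, hq⟩ := B.exists_Qset_eq ebar fun h => hloop (Or.inr ⟨ebar, h⟩)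
  rw [gvalH_eq hsym q hq, hbase.2 q hq]

theorem gvalG_add_gvalH {wt : {e : B.ℰ // e ≠ ebar} → ℚ} (hloop : ¬ B.HasLoop)
    (hsymG : B.BidistSymmG dV) (hsymH : B.BidistSymmH dW) (hsum : B.BidistSum ebar wt dV dW)
    {e : B.ℰ} (he : e ≠ ebar) : B.gvalG dV e + B.gvalH dW e = wt ⟨e, he⟩ := by
  obtain ⟨p, -, hp⟩ := B.exists_Pset_eq e fun h => hloop (Or.inl ⟨e, h⟩)
  obtain ⟨q, -, hq⟩ := B.exists_Qset_eq e fun h => hloop (Or.inr ⟨e, h⟩)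
  rw [gvalG_eq hsymG p hp, gvalH_eq hsymH q hq]
  exact hsum ⟨e, he⟩ p q hp hq

variable (B)

/-- The level `α` of the piece `G_{≥α} / G_{>α}` of `G_{d_V}` containing a vertex. -/
def levG (dV : ↥B.Pset → ℚ) : B.QVertG dV → ℚ :=
  Quotient.lift (fun a : B.IncG => B.gvalG dV a.1.1) fun _ _ hab => by
    induction hab with
    | rel _ _ h => exact h.1
    | refl => rfl
    | symm _ _ _ ih => exact ih.symm
    | trans _ _ _ _ _ ih1 ih2 => exact ih1.trans ih2

def levH (dW : ↥B.Qset → ℚ) : B.QVertH dW → ℚ :=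
  Quotient.lift (fun a : B.IncH => B.gvalH dW a.1.1) fun _ _ hab => by
    induction hab with
    | rel _ _ h => exact h.1
    | refl => rfl
    | symm _ _ _ ih => exact ih.symm
    | trans _ _ _ _ _ ih1 ih2 => exact ih1.trans ih2

variable {B}

theorem levG_of_mem {e : B.ℰ} {c : B.QVertG dV} (hc : c ∈ B.quotEndsG dV e) :
    B.levG dV c = B.gvalG dV e := by
  rcases Sym2.mem_iff.mp hc with rfl | rfl <;> rfl

theorem levH_of_mem {e : B.ℰ} {c : B.QVertH dW} (hc : c ∈ B.quotEndsH dW e) :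
    B.levH dW c = B.gvalH dW e := by
  rcases Sym2.mem_iff.mp hc with rfl | rfl <;> rfl

variable (oV : LinearOrder (B.QVertG dV)) (oW : LinearOrder (B.QVertH dW))

theorem levG_fst_eq_levG_snd (p : ↥(B.quotBigraph dV dW oV oW).Pset) :
    B.levG dV p.1.1 = B.levG dV p.1.2 := by
  obtain ⟨-, e, he⟩ := p.2
  have he' : B.quotEndsG dV e = s(p.1.1, p.1.2) := he
  exact (levG_of_mem (he' ▸ Sym2.mem_mk_left _ _)).trans
    (levG_of_mem (he' ▸ Sym2.mem_mk_right _ _)).symm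

theorem levH_fst_eq_levH_snd (q : ↥(B.quotBigraph dV dW oV oW).Qset) :
    B.levH dW q.1.1 = B.levH dW q.1.2 := by
  obtain ⟨-, e, he⟩ := q.2
  have he' : B.quotEndsH dW e = s(q.1.1, q.1.2) := he
  exact (levH_of_mem (he' ▸ Sym2.mem_mk_left _ _)).trans
    (levH_of_mem (he' ▸ Sym2.mem_mk_right _ _)).symm

theorem levG_eFstG_quot (e : B.ℰ) :
    B.levG dV ((B.quotBigraph dV dW oV oW).eFstG e) = B.gvalG dV e :=
  levG_of_mem ((B.quotBigraph dV dW oV oW).eFstG_mem e)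

theorem levH_eFstH_quot (e : B.ℰ) :
    B.levH dW ((B.quotBigraph dV dW oV oW).eFstH e) = B.gvalH dW e :=
  levH_of_mem ((B.quotBigraph dV dW oV oW).eFstH_mem e)

theorem gvalG_eq_zero_or_eq_of_quotBigraph {c : ℚ} (hloop : ¬ B.HasLoop)
    (hsymG : B.BidistSymmG dV) (hsymH : B.BidistSymmH dW)
    (hsum : B.BidistSum ebar (fun _ => c) dV dW) (hbase : B.BidistBase ebar dV dW)
    {M : ℕ} (hM : 1 ≤ M) (hBd : (B.quotBigraph dV dW oV oW).HasLamanNumber ebar M)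
    {e : B.ℰ} (he : e ≠ ebar) : B.gvalG dV e = 0 ∨ B.gvalG dV e = c := by
  by_contra! hα
  set α := B.gvalG dV e
  have hgvalH : ∀ e', e' ≠ ebar → B.gvalH dW e' = c - B.gvalG dV e' := fun e' he' => by
    linarith [gvalG_add_gvalH hloop hsymG hsymH hsum he']
  obtain ⟨hloop', lam, hlam, hfin, hne⟩ := hBd.exists_finite_nonempty hM ⟨e, he⟩
  refine (ZSet_infinite_of_scaling (SG := {v | B.levG dV v = α})
    (SH := {w | B.levH dW w = c - α}) hloop'
    (fun p => by exact Iff.of_eq (congrArg (· = α) (levG_fst_eq_levG_snd oV oW p)))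
    (fun q => by exact Iff.of_eq (congrArg (· = c - α) (levH_fst_eq_levH_snd oV oW q)))
    ?_ ?_ (fun e' he' => ?_) he (by exact levG_eFstG_quot oV oW e) hlam hne) hfin
  · simpa [levG_eFstG_quot, gvalG_ebar hloop hsymG hbase] using hα.1.symm
  · simp only [Set.mem_ofPred_eq, levH_eFstH_quot, gvalH_ebar hloop hsymH hbase]
    exact fun h => hα.2 (by linarith)
  · rw [Set.mem_ofPred_eq, Set.mem_ofPred_eq, levG_eFstG_quot oV oW e',
      levH_eFstH_quot oV oW e', hgvalH e' he', sub_right_inj]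

end Levels

end Bigraph

theorem statement16_general (B : Bigraph) (hloop : ¬ B.HasLoop)
    (ebar : B.ℰ) (dV : ↥B.Pset → ℚ) (dW : ↥B.Qset → ℚ)
    (hd : B.IsBidistance ebar (fun _ => (-1 : ℚ)) dV dW)
    (M : ℕ) (hM : 1 ≤ M)
    (oV : LinearOrder (B.QVertG dV)) (oW : LinearOrder (B.QVertH dW))
    (hBd : (B.quotBigraph dV dW oV oW).HasLamanNumber ebar M) :
    (∀ p, dV p = 0 ∨ dV p = -1) ∧ (∀ q, dW q = 0 ∨ dW q = -1) := by
  obtain ⟨hsymG, hsymH, hsum, hbase, -, -⟩ := hd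
  have hlevel : ∀ e, e ≠ ebar → B.gvalG dV e = 0 ∨ B.gvalG dV e = -1 := fun e he =>
    Bigraph.gvalG_eq_zero_or_eq_of_quotBigraph oV oW hloop hsymG hsymH hsum hbase hM hBd he
  refine ⟨fun p => ?_, fun q => ?_⟩
  · obtain ⟨-, e, he⟩ := p.2
    by_cases hebar : e = ebar
    · exact Or.inl (hbase.1 p (hebar ▸ he.symm))
    · rw [← Bigraph.gvalG_eq hsymG p he.symm]
      exact hlevel e hebar
  · obtain ⟨-, e, he⟩ := q.2
    by_cases hebar : e = ebar
    · exact Or.inl (hbase.2 q (hebar ▸ he.symm))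
    · have hadd := Bigraph.gvalG_add_gvalH hloop hsymG hsymH hsum hebar
      rw [← Bigraph.gvalH_eq hsymH q he.symm]
      rcases hlevel e hebar with h | h
      · right; linarith
      · left; linarith

/-- If `B` has a positive Laman number with respect to `ē`,
`d` is a bidistance compatible with the weight vector `(-1,…,-1)` and the quotient bigraph
`B_d` has a positive Laman number as well, then `d_V` and `d_W` take values in `{0, -1}`. -/
theorem statement16 (B : Bigraph) (hloop : ¬ B.HasLoop) (hpl : B.PseudoLaman)
    (ebar : B.ℰ) (dV : ↥B.Pset → ℚ) (dW : ↥B.Qset → ℚ)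
    (hd : B.IsBidistance ebar (fun _ => (-1 : ℚ)) dV dW)
    (N : ℕ) (hN : 1 ≤ N) (hB : B.HasLamanNumber ebar N)
    (M : ℕ) (hM : 1 ≤ M)
    (oV : LinearOrder (B.QVertG dV)) (oW : LinearOrder (B.QVertH dW))
    (hBd : (B.quotBigraph dV dW oV oW).HasLamanNumber ebar M) :
    (∀ p, dV p = 0 ∨ dV p = -1) ∧ (∀ q, dW q = 0 ∨ dW q = -1) :=
  statement16_general B hloop ebar dV dW hd M hM oV oW hBd

end LamanPaper
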